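/- arXiv:1301.6432 — 5 statements merged into one kernel-verified Lean document; each statement's English description precedes it below -/
import Mathlib

section
/- For positive reals a_1, ..., a_n, the limit as x → ∞ (x real) of (∏_{k=1}^n (a_k + x))^{1/n} - x equals the arithmetic mean A_n(a) = (1/n)∑_{k=1}^n a_k. -/
/-! Put `t = x⁻¹`. Then `(∏ (a k + x))^(1/n) - x = (g t - g 0) / t` with
`g t = (∏ (1 + a k t))^(1/n)`, so the limit is `g'(0) = (1/n) ∑ a k`. -/

open Finset Filter Real Topology

theorem tendsto_mul_sub_comp_inv_atTop {g : ℝ → ℝ} {g' : ℝ} (hg : HasDerivAt g g' 0) :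
    Tendsto (fun x => x * (g x⁻¹ - g 0)) atTop (𝓝 g') := by
  have hinv : Tendsto (fun x : ℝ => x⁻¹) atTop (𝓝[≠] 0) :=
    tendsto_inv_atTop_nhdsGT_zero.mono_right (nhdsWithin_mono 0 fun _ hy => ne_of_gt hy)
  convert (hasDerivAt_iff_tendsto_slope.mp hg).comp hinv using 1
  ext x
  simp [slope]

theorem hasDerivAt_prod_one_add_mul {ι : Type*} (s : Finset ι) (a : ι → ℝ) :
    HasDerivAt (fun t => ∏ k ∈ s, (1 + a k * t)) (∑ k ∈ s, a k) 0 := by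
  classical
  have hfactor (k : ι) : HasDerivAt (fun t => 1 + a k * t) (a k) 0 := by
    simpa using ((hasDerivAt_id (0 : ℝ)).const_mul (a k)).const_add 1
  simpa using HasDerivAt.fun_finsetProd fun k _ => hfactor k

theorem hasDerivAt_prod_one_add_mul_rpow {ι : Type*} (s : Finset ι) (a : ι → ℝ) (p : ℝ) :
    HasDerivAt (fun t => (∏ k ∈ s, (1 + a k * t)) ^ p) ((∑ k ∈ s, a k) * p) 0 := by
  simpa using (hasDerivAt_prod_one_add_mul s a).rpow_const (p := p) (by simp)

theorem prod_add_rpow_inv_card_eq {ι : Type*} {s : Finset ι} {n : ℕ} (hs : #s = n) (hn : n ≠ 0)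
    (a : ι → ℝ) {x : ℝ} (hx : 0 < x) (hax : ∀ k ∈ s, 0 ≤ a k + x) :
    (∏ k ∈ s, (a k + x)) ^ (n⁻¹ : ℝ) = x * (∏ k ∈ s, (1 + a k * x⁻¹)) ^ (n⁻¹ : ℝ) := by
  have hfactor (k : ι) : a k + x = x * (1 + a k * x⁻¹) := by field_simp; ring
  have hnonneg : 0 ≤ ∏ k ∈ s, (1 + a k * x⁻¹) := prod_nonneg fun k hk => by
    rw [← mul_nonneg_iff_of_pos_left hx, ← hfactor]; exact hax k hk
  rw [prod_congr rfl fun k _ => hfactor k, prod_mul_distrib, prod_const, hs,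
    mul_rpow (pow_nonneg hx.le n) hnonneg, pow_rpow_inv_natCast hx.le hn]

theorem geometric_mean_shift_limit_atTop_general
    (n : ℕ) (hn : 1 ≤ n) (a : ℕ → ℝ) :
    Tendsto
      (fun x : ℝ =>
        (∏ k ∈ Finset.Icc 1 n, (a k + x)) ^ ((1 : ℝ) / n) - x)
      atTop
      (nhds ((∑ k ∈ Finset.Icc 1 n, a k) / n)) := by
  have hlim := tendsto_mul_sub_comp_inv_atTop
    (hasDerivAt_prod_one_add_mul_rpow (Icc 1 n) a (n⁻¹ : ℝ))
  rw [← div_eq_mul_inv] at hlim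
  refine hlim.congr' ?_
  have hax : ∀ᶠ x in atTop, ∀ k ∈ Icc 1 n, 0 ≤ a k + x :=
    (eventually_all_finset _).2 fun k _ => by
      filter_upwards [eventually_ge_atTop (-a k)] with x hx using by linarith
  filter_upwards [eventually_gt_atTop 0, hax] with x hx hax
  rw [one_div, prod_add_rpow_inv_card_eq (by simp) (by omega) a hx hax]
  simp [mul_sub]

theorem geometric_mean_shift_limit_atTop
    (n : ℕ) (hn : 1 ≤ n) (a : ℕ → ℝ)
    (hpos : ∀ k ∈ Finset.Icc 1 n, 0 < a k) :
    Tendsto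
      (fun x : ℝ =>
        (∏ k ∈ Finset.Icc 1 n, (a k + x)) ^ ((1 : ℝ) / n) - x)
      atTop
      (nhds ((∑ k ∈ Finset.Icc 1 n, a k) / n)) :=
  geometric_mean_shift_limit_atTop_general n hn a
end

section
/- Let a_1 ≤ a_2 ≤ ... ≤ a_n be positive reals, fix ℓ with 1 ≤ ℓ ≤ n-1, and fix t with a_ℓ - a_1 < t < a_{ℓ+1} - a_1. Define h_n(z) = exp((1/n)∑_{k=1}^n Log(a_k - a_1 + z)) - z. Then the limit as ε → 0⁺ of Im h_n(-t + iε) equals (∏_{k=1}^n |a_k - a_1 - t|)^{1/n} · sin(ℓπ/n). -/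
open Finset Filter Real Complex Topology

/-!
Write `x_k = a_k - a_1 - t`; by monotonicity of `a`, the hypothesis on `t` says that `x_k < 0` for `k ≤ ℓ`
and `x_k > 0` for `k > ℓ`. As `ε ↓ 0` the points `x_k + iε` reach the real axis from above, and
`Log` is continuous from the closed upper half-plane at every nonzero point (on the cut it takes
the upper value `log |x| + iπ`). Hence `(1/n) ∑ Log (x_k + iε) → (1/n) ∑ log |x_k| + iℓπ/n`, and
the imaginary part of its exponential is `(∏ |x_k|)^{1/n} sin (ℓπ/n)`; the term `-z` contributes
`-ε → 0` to the imaginary part.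
-/

theorem monotoneOn_Icc_of_le_succ {α : Type*} [Preorder α] {f : ℕ → α} {p q : ℕ}
    (hf : ∀ k, p ≤ k → k < q → f k ≤ f (k + 1)) : MonotoneOn f (Set.Icc p q) := by
  rintro i ⟨hpi, -⟩ j ⟨-, hjq⟩ hij
  induction j, hij using Nat.le_induction with
  | base => exact le_rfl
  | succ j hij ih => exact (ih (by omega)).trans (hf j (by omega) (by omega))

section CrossingIndex

variable {α : Type*} [LinearOrder α] {f : ℕ → α} {n ℓ : ℕ} {c : α}

theorem MonotoneOn.filter_lt_eq_Icc (hf : MonotoneOn f (Set.Icc 1 n)) (hℓ : ℓ < n)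
    (hc₁ : f ℓ < c) (hc₂ : c < f (ℓ + 1)) : {k ∈ Icc 1 n | f k < c} = Icc 1 ℓ := by
  ext k
  simp only [mem_filter, mem_Icc]
  constructor
  · rintro ⟨⟨hk1, hkn⟩, hfk⟩
    refine ⟨hk1, not_lt.mp fun hℓk => ?_⟩
    exact (hc₂.trans_le (hf ⟨by omega, by omega⟩ ⟨hk1, hkn⟩ hℓk)).not_gt hfk
  · rintro ⟨hk1, hkℓ⟩
    exact ⟨⟨hk1, by omega⟩, (hf ⟨hk1, by omega⟩ ⟨by omega, by omega⟩ hkℓ).trans_lt hc₁⟩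

theorem MonotoneOn.apply_ne_of_lt_of_lt (hf : MonotoneOn f (Set.Icc 1 n)) (hℓ : ℓ < n)
    (hc₁ : f ℓ < c) (hc₂ : c < f (ℓ + 1)) : ∀ k ∈ Icc 1 n, f k ≠ c := by
  intro k hk
  obtain ⟨hk1, hkn⟩ := mem_Icc.mp hk
  rcases le_or_gt k ℓ with hkℓ | hℓk
  · exact ((hf ⟨hk1, hkn⟩ ⟨by omega, by omega⟩ hkℓ).trans_lt hc₁).ne
  · exact (hc₂.trans_le (hf ⟨by omega, by omega⟩ ⟨hk1, hkn⟩ hℓk)).ne'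

end CrossingIndex

namespace Complex

theorem continuousWithinAt_log_im_nonneg {z : ℂ} (hz : z ≠ 0) :
    ContinuousWithinAt log {w | 0 ≤ w.im} z := by
  by_cases hslit : z ∈ slitPlane
  · exact (continuousAt_clog hslit).continuousWithinAt
  · rw [mem_slitPlane_iff, not_or, not_lt, not_not] at hslit
    have hre : z.re < 0 := hslit.1.lt_of_ne fun h => hz (ext h hslit.2)
    exact continuousWithinAt_log_of_re_neg_of_im_zero hre hslit.2

theorem tendsto_log_add_mul_I_nhdsGT_zero {z : ℂ} (hz : z ≠ 0) (him : 0 ≤ z.im) :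
    Tendsto (fun ε : ℝ => log (z + ε * I)) (𝓝[>] 0) (𝓝 (log z)) := by
  have hpath : ContinuousWithinAt (fun ε : ℝ => z + ε * I) (Set.Ioi 0) 0 := by
    fun_prop
  have hmaps : Set.MapsTo (fun ε : ℝ => z + ε * I) (Set.Ioi 0) {w | 0 ≤ w.im} := by
    intro ε hε
    simp only [Set.mem_ofPred_eq, add_im, mul_I_im, ofReal_re]
    linarith [Set.mem_Ioi.mp hε]
  simpa [Function.comp_def] using
    ((continuousWithinAt_log_im_nonneg hz).comp_of_eq hpath hmaps (by simp)).tendsto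

theorem tendsto_exp_mul_sum_log_add_mul_I_nhdsGT_zero {ι : Type*} (s : Finset ι) {z : ι → ℂ}
    (hz : ∀ k ∈ s, z k ≠ 0) (him : ∀ k ∈ s, 0 ≤ (z k).im) (c : ℂ) :
    Tendsto (fun ε : ℝ => exp (c * ∑ k ∈ s, log (z k + ε * I))) (𝓝[>] 0)
      (𝓝 (exp (c * ∑ k ∈ s, log (z k)))) :=
  (continuous_exp.tendsto _).comp <| (tendsto_finsetSum _ fun k hk =>
    tendsto_log_add_mul_I_nhdsGT_zero (hz k hk) (him k hk)).const_mul c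

theorem im_exp_ofReal_mul_sum_log {ι : Type*} (s : Finset ι) {z : ι → ℂ}
    (hz : ∀ k ∈ s, z k ≠ 0) (c : ℝ) :
    (exp (c * ∑ k ∈ s, log (z k))).im
      = (∏ k ∈ s, ‖z k‖) ^ c * Real.sin (c * ∑ k ∈ s, arg (z k)) := by
  have hprod : 0 < ∏ k ∈ s, ‖z k‖ := prod_pos fun k hk => norm_pos_iff.mpr (hz k hk)
  rw [exp_im, rpow_def_of_pos hprod, Real.log_prod fun k hk => (norm_pos_iff.mpr (hz k hk)).ne']
  simp [re_sum, im_sum, log_re, log_im, mul_comm]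

theorem sum_arg_ofReal {ι : Type*} (s : Finset ι) (x : ι → ℝ) :
    ∑ k ∈ s, arg (x k : ℂ) = #{k ∈ s | x k < 0} * π := by
  have harg : ∀ k, arg (x k : ℂ) = if x k < 0 then π else 0 := fun k => by
    split_ifs with h
    · exact arg_ofReal_of_neg h
    · exact arg_ofReal_of_nonneg (not_lt.mp h)
  simp [harg, sum_ite]

end Complex

theorem imaginary_part_limit_on_cut_general
    (n : ℕ) (a : ℕ → ℝ)
    (hmono : ∀ k ∈ Finset.Icc 1 (n - 1), a k ≤ a (k + 1))
    (ℓ : ℕ) (hℓ : ℓ ∈ Finset.Icc 1 (n - 1))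
    (t : ℝ) (ht1 : a ℓ - a 1 < t) (ht2 : t < a (ℓ + 1) - a 1) :
    Tendsto
      (fun ε : ℝ =>
        (Complex.exp ((1 / (n : ℂ)) *
            ∑ k ∈ Finset.Icc 1 n,
              Complex.log (((a k - a 1 : ℝ) : ℂ) + (-(t : ℂ) + (ε : ℂ) * Complex.I)))
          - (-(t : ℂ) + (ε : ℂ) * Complex.I)).im)
      (nhdsWithin 0 (Set.Ioi 0))
      (nhds ((∏ k ∈ Finset.Icc 1 n, |a k - a 1 - t|) ^ ((1 : ℝ) / n) *
        Real.sin (ℓ * Real.pi / n))) := by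
  have hℓn : ℓ < n := by have := mem_Icc.mp hℓ; omega
  have hf : MonotoneOn (fun k => a k - a 1) (Set.Icc 1 n) := monotoneOn_Icc_of_le_succ
    fun k hk1 hkn => sub_le_sub_right (hmono k (mem_Icc.mpr ⟨hk1, by omega⟩)) _
  set x : ℕ → ℝ := fun k => a k - a 1 - t
  have hx0 : ∀ k ∈ Icc 1 n, (x k : ℂ) ≠ 0 := fun k hk =>
    ofReal_ne_zero.mpr (sub_ne_zero.mpr (hf.apply_ne_of_lt_of_lt hℓn ht1 ht2 k hk))
  have hneg : {k ∈ Icc 1 n | x k < 0} = Icc 1 ℓ := by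
    simpa only [x, sub_neg] using hf.filter_lt_eq_Icc hℓn ht1 ht2
  have hfun : ∀ ε : ℝ, (exp ((1 / (n : ℂ)) *
        ∑ k ∈ Icc 1 n, log (((a k - a 1 : ℝ) : ℂ) + (-(t : ℂ) + ε * I))) - (-(t : ℂ) + ε * I)).im
      = (exp (((1 / n : ℝ) : ℂ) * ∑ k ∈ Icc 1 n, log (x k + ε * I))).im - ε := by
    intro ε
    have hterm : ∀ k, ((a k - a 1 : ℝ) : ℂ) + (-(t : ℂ) + ε * I) = x k + ε * I := fun k => by
      push_cast [x]; ring
    simp only [hterm, sub_im, add_im, neg_im, ofReal_im, mul_I_im, ofReal_re]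
    push_cast
    ring
  have hval : (exp (((1 / n : ℝ) : ℂ) * ∑ k ∈ Icc 1 n, log (x k : ℂ))).im - 0
      = (∏ k ∈ Icc 1 n, |a k - a 1 - t|) ^ ((1 : ℝ) / n) * Real.sin (ℓ * π / n) := by
    rw [sub_zero, im_exp_ofReal_mul_sum_log _ hx0, sum_arg_ofReal, hneg, Nat.card_Icc,
      Nat.add_sub_cancel]
    simp only [norm_real, Real.norm_eq_abs]
    congr 2
    ring
  simp_rw [hfun, ← hval]
  exact ((continuous_im.tendsto _).comp (tendsto_exp_mul_sum_log_add_mul_I_nhdsGT_zero _ hx0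
    (fun k _ => by simp) _)).sub (tendsto_nhdsWithin_of_tendsto_nhds tendsto_id)

theorem imaginary_part_limit_on_cut
    (n : ℕ) (hn : 2 ≤ n) (a : ℕ → ℝ)
    (hpos : ∀ k ∈ Finset.Icc 1 n, 0 < a k)
    (hmono : ∀ k ∈ Finset.Icc 1 (n - 1), a k ≤ a (k + 1))
    (ℓ : ℕ) (hℓ : ℓ ∈ Finset.Icc 1 (n - 1))
    (t : ℝ) (ht1 : a ℓ - a 1 < t) (ht2 : t < a (ℓ + 1) - a 1) :
    Tendsto
      (fun ε : ℝ =>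
        (Complex.exp ((1 / (n : ℂ)) *
            ∑ k ∈ Finset.Icc 1 n,
              Complex.log (((a k - a 1 : ℝ) : ℂ) + (-(t : ℂ) + (ε : ℂ) * Complex.I)))
          - (-(t : ℂ) + (ε : ℂ) * Complex.I)).im)
      (nhdsWithin 0 (Set.Ioi 0))
      (nhds ((∏ k ∈ Finset.Icc 1 n, |a k - a 1 - t|) ^ ((1 : ℝ) / n) *
        Real.sin (ℓ * Real.pi / n))) :=
  imaginary_part_limit_on_cut_general n a hmono ℓ hℓ t ht1 ht2
end

section
/- Let 0 < a < b. Then √(ab) = (a+b)/2 - (1/π)∫_a^b √((t-a)(b-t)) dt/t. -/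
/-!
The integrand has an elementary primitive. Besides `√((x - a) * (b - x))` and the arcsine of the
affine map sending `[a, b]` onto `[-1, 1]`, it contains that same arcsine composed with the
reflection `x ↦ a * b / x`, which preserves `[a, b]` and multiplies `√((x - a) * (b - x))` by
`√(a * b) / x`; this is where the geometric mean comes from. At the endpoints the arcsines take
the values `± π / 2`.
-/

open Real intervalIntegral Set MeasureTheory

theorem HasDerivAt.arcsin {f : ℝ → ℝ} {f' x : ℝ} (hf : HasDerivAt f f' x)
    (h₁ : f x ≠ -1) (h₂ : f x ≠ 1) :
    HasDerivAt (fun y => arcsin (f y)) (f' / √(1 - f x ^ 2)) x := by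
  simpa only [Function.comp_def, one_div, inv_mul_eq_div] using
    (hasDerivAt_arcsin h₁ h₂).comp x hf

section

variable {a b x : ℝ}

theorem hasDerivAt_sqrt_mul_sub (h : 0 < (x - a) * (b - x)) :
    HasDerivAt (fun x => √((x - a) * (b - x)))
      ((a + b - 2 * x) / (2 * √((x - a) * (b - x)))) x := by
  have hq : HasDerivAt (fun x => (x - a) * (b - x)) (a + b - 2 * x) x :=
    (((hasDerivAt_id' x).sub_const a).mul ((hasDerivAt_id' x).const_sub b)).congr_deriv (by ring)
  exact hq.sqrt h.ne'

theorem hasDerivAt_arcsin_normalize (hax : a < x) (hxb : x < b) :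
    HasDerivAt (fun x => arcsin ((2 * x - a - b) / (b - a))) (√((x - a) * (b - x)))⁻¹ x := by
  have hba : 0 < b - a := by linarith
  have hq : 0 < (x - a) * (b - x) := mul_pos (by linarith) (by linarith)
  set s := √((x - a) * (b - x))
  have hs : 0 < s := sqrt_pos.mpr hq
  have hs2 : s ^ 2 = (x - a) * (b - x) := sq_sqrt hq.le
  have hu : HasDerivAt (fun x => (2 * x - a - b) / (b - a)) (2 / (b - a)) x :=
    ((((hasDerivAt_id' x).const_mul 2).sub_const a).sub_const b).div_const (b - a) |>.congr_deriv
      (by ring)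
  have h1 : 1 - ((2 * x - a - b) / (b - a)) ^ 2 = (2 * s / (b - a)) ^ 2 := by
    field_simp; linear_combination (-4) * hs2
  have h1pos : 0 < 1 - ((2 * x - a - b) / (b - a)) ^ 2 := by rw [h1]; positivity
  have hsqrt : √(1 - ((2 * x - a - b) / (b - a)) ^ 2) = 2 * s / (b - a) := by
    rw [h1, sqrt_sq (by positivity)]
  refine (hu.arcsin (fun h => h1pos.ne' ?_) (fun h => h1pos.ne' ?_)).congr_deriv ?_
  · rw [h]; norm_num
  · rw [h]; norm_num
  · rw [hsqrt]; field_simp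

theorem sqrt_mul_sub_div_reflect (hab : 0 ≤ a * b) (hx : 0 < x) :
    √((a * b / x - a) * (b - a * b / x)) = √(a * b) * √((x - a) * (b - x)) / x := by
  have h : (a * b / x - a) * (b - a * b / x) = a * b * ((x - a) * (b - x)) / x ^ 2 := by
    field_simp
  rw [h, sqrt_div' _ (sq_nonneg x), sqrt_sq hx.le, sqrt_mul hab]

theorem hasDerivAt_arcsin_normalize_reflect (ha : 0 < a) (hax : a < x) (hxb : x < b) :
    HasDerivAt (fun x => arcsin ((2 * (a * b / x) - a - b) / (b - a)))
      (-(√(a * b) / (x * √((x - a) * (b - x))))) x := by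
  have hx : 0 < x := ha.trans hax
  have hab : 0 < a * b := mul_pos ha (hx.trans hxb)
  have hr : HasDerivAt (fun x => a * b / x) (-(a * b) / x ^ 2) x :=
    ((hasDerivAt_const x (a * b)).div (hasDerivAt_id' x) hx.ne').congr_deriv (by ring)
  have hrax : a < a * b / x := by rw [lt_div_iff₀ hx]; nlinarith
  have hrxb : a * b / x < b := by rw [div_lt_iff₀ hx]; nlinarith
  refine ((hasDerivAt_arcsin_normalize hrax hrxb).comp x hr).congr_deriv ?_
  have hc : √(a * b) ^ 2 = a * b := sq_sqrt hab.le
  have hs0 : 0 < √((x - a) * (b - x)) := sqrt_pos.mpr (mul_pos (by linarith) (by linarith))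
  rw [sqrt_mul_sub_div_reflect hab.le hx]
  field_simp
  linear_combination hc

noncomputable def sqrtMulSubDivPrimitive (a b x : ℝ) : ℝ :=
  √((x - a) * (b - x)) + (a + b) / 2 * arcsin ((2 * x - a - b) / (b - a))
    + √(a * b) * arcsin ((2 * (a * b / x) - a - b) / (b - a))

theorem hasDerivAt_sqrtMulSubDivPrimitive (ha : 0 < a) (hax : a < x) (hxb : x < b) :
    HasDerivAt (sqrtMulSubDivPrimitive a b) (√((x - a) * (b - x)) / x) x := by
  have hx : 0 < x := ha.trans hax
  have hq : 0 < (x - a) * (b - x) := mul_pos (by linarith) (by linarith)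
  have hs2 : √((x - a) * (b - x)) ^ 2 = (x - a) * (b - x) := sq_sqrt hq.le
  have hs0 : 0 < √((x - a) * (b - x)) := sqrt_pos.mpr hq
  have hc : √(a * b) ^ 2 = a * b := sq_sqrt (mul_pos ha (hx.trans hxb)).le
  refine ((hasDerivAt_sqrt_mul_sub hq).add
    ((hasDerivAt_arcsin_normalize hax hxb).const_mul _)).add
    ((hasDerivAt_arcsin_normalize_reflect ha hax hxb).const_mul _) |>.congr_deriv ?_
  field_simp
  linear_combination (-2) * hc - 2 * hs2

theorem continuousOn_sqrtMulSubDivPrimitive (ha : 0 < a) :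
    ContinuousOn (sqrtMulSubDivPrimitive a b) (Icc a b) := by
  have hx : ∀ x ∈ Icc a b, x ≠ 0 := fun x hx => (ha.trans_le hx.1).ne'
  unfold sqrtMulSubDivPrimitive
  fun_prop (disch := assumption)

theorem sqrtMulSubDivPrimitive_sub (ha : a ≠ 0) (hb : b ≠ 0) (hab : a ≠ b) :
    sqrtMulSubDivPrimitive a b b - sqrtMulSubDivPrimitive a b a =
      π * ((a + b) / 2 - √(a * b)) := by
  have hba : b - a ≠ 0 := sub_ne_zero.mpr hab.symm
  have h1 : (2 * b - a - b) / (b - a) = 1 := by field_simp; ring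
  have h2 : (2 * a - a - b) / (b - a) = -1 := by field_simp; ring
  simp only [sqrtMulSubDivPrimitive, mul_div_cancel_left₀ _ ha, mul_div_cancel_right₀ _ hb,
    sub_self, zero_mul, mul_zero, sqrt_zero, h1, h2, arcsin_one, arcsin_neg_one]
  ring

theorem integral_sqrt_mul_sub_div (ha : 0 < a) (hab : a < b) :
    ∫ x in a..b, √((x - a) * (b - x)) / x = π * ((a + b) / 2 - √(a * b)) := by
  have hint : IntervalIntegrable (fun x => √((x - a) * (b - x)) / x) volume a b := by
    refine ContinuousOn.intervalIntegrable ?_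
    have hx : ∀ x ∈ uIcc a b, x ≠ 0 := fun x hx =>
      (ha.trans_le (uIcc_of_le hab.le ▸ hx).1).ne'
    fun_prop (disch := assumption)
  rw [integral_eq_sub_of_hasDerivAt_of_le hab.le (continuousOn_sqrtMulSubDivPrimitive ha)
    (fun x hx => hasDerivAt_sqrtMulSubDivPrimitive ha hx.1 hx.2) hint]
  exact sqrtMulSubDivPrimitive_sub ha.ne' (ha.trans hab).ne' hab.ne

end

theorem sqrt_integral_representation_real
    (a b : ℝ) (ha : 0 < a) (hab : a < b) :
    Real.sqrt (a * b)
      = (a + b) / 2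
        - (1 / Real.pi) * ∫ t in a..b, Real.sqrt ((t - a) * (b - t)) / t := by
  rw [integral_sqrt_mul_sub_div ha hab, one_div, inv_mul_cancel_left₀ pi_ne_zero]
  ring
end

section
/- Let 0 < a_1 ≤ a_2 ≤ ... ≤ a_n and let x, y be real with 0 < x < y. Then (∏_{k=1}^n (a_k + y))^{1/n} - y ≥ (∏_{k=1}^n (a_k + x))^{1/n} - x; that is, x ↦ G_n(a + x) - x is nondecreasing on (0, ∞). -/
/-!
The geometric mean `G` of `n` nonnegative numbers satisfies Minkowski's inequality
`G(u) + G(v) ≤ G(u + v)`: dividing by `G(u + v)`, the two terms are geometric means of the ratios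
`uᵢ / (uᵢ + vᵢ)` and `vᵢ / (uᵢ + vᵢ)`, so by AM-GM their sum is at most the mean of
`uᵢ / (uᵢ + vᵢ) + vᵢ / (uᵢ + vᵢ) = 1`. Taking `u = a + x` and `v` the constant `y - x` gives
`G(a + x) + (y - x) ≤ G(a + y)`.
-/

open Finset

namespace Real

variable {ι : Type*} {s : Finset ι}

lemma geom_mean_le_arith_mean_uniform (hs : s.Nonempty) {z : ι → ℝ} (hz : ∀ i ∈ s, 0 ≤ z i) :
    (∏ i ∈ s, z i) ^ ((1 : ℝ) / #s) ≤ (∑ i ∈ s, z i) / #s := by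
  simpa [one_div] using geom_mean_le_arith_mean s (fun _ => 1) z (fun _ _ => zero_le_one)
    (by simpa using hs) hz

lemma prod_const_rpow_one_div_card (hs : s.Nonempty) {c : ℝ} (hc : 0 ≤ c) :
    (∏ _i ∈ s, c) ^ ((1 : ℝ) / #s) = c := by
  have hcard : (#s : ℝ) ≠ 0 := by simpa using hs.ne_empty
  rw [prod_const, ← rpow_natCast, ← rpow_mul hc, mul_one_div_cancel hcard, rpow_one]

theorem geom_mean_add_geom_mean_le (hs : s.Nonempty) {f g : ι → ℝ}
    (hf : ∀ i ∈ s, 0 ≤ f i) (hg : ∀ i ∈ s, 0 ≤ g i) :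
    (∏ i ∈ s, f i) ^ ((1 : ℝ) / #s) + (∏ i ∈ s, g i) ^ ((1 : ℝ) / #s)
      ≤ (∏ i ∈ s, (f i + g i)) ^ ((1 : ℝ) / #s) := by
  set r : ℝ := 1 / #s
  have hcard : (#s : ℝ) ≠ 0 := by simpa using hs.ne_empty
  by_cases! hzero : ∃ i ∈ s, f i + g i = 0
  · obtain ⟨i, hi, hfg⟩ := hzero
    have hfi : f i = 0 := by linarith [hf i hi, hg i hi]
    have hgi : g i = 0 := by linarith [hf i hi, hg i hi]
    have hr : r ≠ 0 := one_div_ne_zero hcard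
    rw [prod_eq_zero hi hfi, prod_eq_zero hi hgi, prod_eq_zero hi hfg, zero_rpow hr, add_zero]
  have hpos : ∀ i ∈ s, 0 < f i + g i := fun i hi =>
    (add_nonneg (hf i hi) (hg i hi)).lt_of_ne (hzero i hi).symm
  have hH : 0 < (∏ i ∈ s, (f i + g i)) ^ r := rpow_pos_of_pos (prod_pos hpos) r
  have amgm : ∀ u : ι → ℝ, (∀ i ∈ s, 0 ≤ u i) →
      (∏ i ∈ s, u i) ^ r / (∏ i ∈ s, (f i + g i)) ^ r ≤ (∑ i ∈ s, u i / (f i + g i)) / #s := by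
    intro u hu
    rw [← div_rpow (prod_nonneg hu) (prod_pos hpos).le, ← prod_div_distrib]
    exact geom_mean_le_arith_mean_uniform hs fun i hi => div_nonneg (hu i hi) (hpos i hi).le
  have hsum : ∑ i ∈ s, (f i / (f i + g i) + g i / (f i + g i)) = #s := by
    rw [sum_congr rfl fun i hi => by rw [← add_div, div_self (hpos i hi).ne'], sum_const,
      nsmul_one]
  have key := add_le_add (amgm f hf) (amgm g hg)
  rwa [← add_div, ← add_div, ← sum_add_distrib, hsum, div_self hcard,
    div_le_one hH] at key

theorem geom_mean_add_le_geom_mean_add_const (hs : s.Nonempty) {f : ι → ℝ}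
    (hf : ∀ i ∈ s, 0 ≤ f i) {c : ℝ} (hc : 0 ≤ c) :
    (∏ i ∈ s, f i) ^ ((1 : ℝ) / #s) + c ≤ (∏ i ∈ s, (f i + c)) ^ ((1 : ℝ) / #s) := by
  simpa only [prod_const_rpow_one_div_card hs hc] using
    geom_mean_add_geom_mean_le hs hf fun _ _ => hc

end Real

theorem shifted_geometric_mean_monotone_general
    (n : ℕ) (hn : 1 ≤ n) (a : ℕ → ℝ)
    (hpos : ∀ k ∈ Finset.Icc 1 n, 0 < a k)
    (x y : ℝ) (hx : 0 < x) (hxy : x < y) :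
    (∏ k ∈ Finset.Icc 1 n, (a k + x)) ^ ((1 : ℝ) / n) - x
      ≤ (∏ k ∈ Finset.Icc 1 n, (a k + y)) ^ ((1 : ℝ) / n) - y := by
  have hcard : #(Icc 1 n) = n := by simp
  have key := Real.geom_mean_add_le_geom_mean_add_const (nonempty_Icc.2 hn)
    (fun k hk => (add_pos (hpos k hk) hx).le) (sub_nonneg.2 hxy.le)
  simp only [add_add_sub_cancel, hcard] at key
  linarith

theorem shifted_geometric_mean_monotone
    (n : ℕ) (hn : 1 ≤ n) (a : ℕ → ℝ)
    (hpos : ∀ k ∈ Finset.Icc 1 n, 0 < a k)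
    (hmono : ∀ k ∈ Finset.Icc 1 (n - 1), a k ≤ a (k + 1))
    (x y : ℝ) (hx : 0 < x) (hxy : x < y) :
    (∏ k ∈ Finset.Icc 1 n, (a k + x)) ^ ((1 : ℝ) / n) - x
      ≤ (∏ k ∈ Finset.Icc 1 n, (a k + y)) ^ ((1 : ℝ) / n) - y :=
  shifted_geometric_mean_monotone_general n hn a hpos x y hx hxy
end

section
/- Let 0 < a_1 ≤ a_2 ≤ ... ≤ a_n. The function z ↦ exp((1/n)∑_{k=1}^n Log(a_k + z)) - z - A_n(a), where A_n(a) = (1/n)∑ a_k, is holomorphic on ℂ \ (-∞, -a_1] and tends to 0 as |z| → ∞. -/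
/-!
For `‖z‖ > max |a k|` there is no branch jump in `Log (a k + z) = Log z + Log (1 + a k / z)`, because
`a k + z` and `z` have the same imaginary part. Hence the exponent equals `Log z + φ z` with
`z * φ z → A_n(a)`, and `exp (Log z + φ z) - z = z * (exp (φ z) - 1) → A_n(a)` because
`exp w - 1 = w + o(w)`. Holomorphy holds since `a 1 ≤ a k` keeps every `a k + z` in the slit plane.
-/

open Finset Filter Real Complex Asymptotics Topology Bornology

theorem HasDerivAt.tendsto_mul_comp {𝕜 α : Type*} [NontriviallyNormedField 𝕜] {l : Filter α}
    {f : 𝕜 → 𝕜} {f' A : 𝕜} {g u : α → 𝕜} (hf : HasDerivAt f f' 0) (hf0 : f 0 = 0)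
    (hg : Tendsto g l (𝓝 0)) (hug : Tendsto (fun x => u x * g x) l (𝓝 A)) :
    Tendsto (fun x => u x * f (g x)) l (𝓝 (f' * A)) := by
  have hlin : (fun x => f (g x) - f' * g x) =o[l] g := by
    have := (hasDerivAt_iff_isLittleO.1 hf).comp_tendsto hg
    simpa [Function.comp_def, hf0, mul_comm] using this
  have herr : Tendsto (fun x => u x * (f (g x) - f' * g x)) l (𝓝 0) :=
    isLittleO_one_iff 𝕜 |>.1 <|
      ((isBigO_refl u l).mul_isLittleO hlin).trans_isBigO (hug.isBigO_one 𝕜)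
  simpa [mul_sub, mul_left_comm] using herr.add (hug.const_mul f')

theorem Complex.log_ofReal_add {t : ℝ} {z : ℂ} (h : |t| < ‖z‖) :
    log (t + z) = log z + log (1 + t / z) := by
  have hz : z ≠ 0 := norm_pos_iff.1 ((abs_nonneg t).trans_lt h)
  set w := 1 + (t : ℂ) / z
  have hw : 0 < w.re := by
    have : ‖(t : ℂ) / z‖ < 1 := by
      rwa [norm_div, norm_real, Real.norm_eq_abs, div_lt_one (norm_pos_iff.2 hz)]
    have := (abs_le.1 (abs_re_le_norm ((t : ℂ) / z))).1
    simp only [w, add_re, one_re]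
    linarith
  have hw0 : w ≠ 0 := fun h => by simp [h] at hw
  have hzw : z * w = t + z := by simp only [w]; field_simp; ring
  rw [← hzw, log_mul_eq_add_log_iff hz hw0]
  have harg_w : |arg w| < π / 2 := abs_arg_lt_pi_div_two_iff.2 (Or.inl hw)
  have hhalf : |arg z - arg (t + z)| ≤ π := by
    have him : (t + z).im = z.im := by simp
    rw [abs_le]
    rcases le_or_gt 0 z.im with h | h
    · have := arg_nonneg_iff.2 h
      have := arg_nonneg_iff.2 (him ▸ h)
      constructor <;> linarith [arg_le_pi z, arg_le_pi (t + z)]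
    · have := arg_neg_iff.2 h
      have := arg_neg_iff.2 (him ▸ h)
      constructor <;> linarith [neg_pi_lt_arg z, neg_pi_lt_arg (t + z)]
  have hangle : ((arg z + arg w : ℝ) : Real.Angle) = (arg (t + z) : ℝ) := by
    rw [Real.Angle.coe_add, ← arg_mul_coe_angle hz hw0, hzw]
  obtain ⟨k, hk⟩ := Real.Angle.angle_eq_iff_two_pi_dvd_sub.1 hangle
  -- `z` and `t + z` lie in the same half-plane and `|arg w| < π / 2`,
  -- so the discrepancy `2πk` is less than `2π`.
  have hk0 : k = 0 := by
    rw [abs_lt] at harg_w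
    rw [abs_le] at hhalf
    have h1 : (k : ℝ) < 1 := by nlinarith [pi_pos]
    have h2 : -1 < (k : ℝ) := by nlinarith [pi_pos]
    have : k < 1 := by exact_mod_cast h1
    have : -1 < k := by exact_mod_cast h2
    omega
  rw [hk0, Int.cast_zero, mul_zero, sub_eq_zero] at hk
  rw [hk]
  exact ⟨neg_pi_lt_arg _, arg_le_pi _⟩

theorem Complex.tendsto_mul_log_one_add_div_cobounded (c : ℂ) :
    Tendsto (fun z => z * log (1 + c / z)) (cobounded ℂ) (𝓝 c) := by
  have hlog : HasDerivAt (fun w : ℂ => log (1 + w)) 1 0 := by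
    simpa using ((hasDerivAt_id (0 : ℂ)).const_add 1).clog (by simp)
  have hdiv : Tendsto (fun z : ℂ => c / z) (cobounded ℂ) (𝓝 0) := by
    simpa [div_eq_mul_inv] using tendsto_inv₀_cobounded.const_mul c
  have hmul : Tendsto (fun z : ℂ => z * (c / z)) (cobounded ℂ) (𝓝 c) :=
    tendsto_const_nhds.congr' <| by
      filter_upwards [eventually_ne_cobounded 0] with z hz
      field_simp
  simpa using hlog.tendsto_mul_comp (by simp) hdiv hmul

theorem tendsto_exp_sum_mul_log_ofReal_add_sub_cobounded {ι : Type*} (s : Finset ι) (w : ι → ℂ)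
    (hw : ∑ k ∈ s, w k = 1) (a : ι → ℝ) :
    Tendsto (fun z => exp (∑ k ∈ s, w k * log ((a k : ℂ) + z)) - z - ∑ k ∈ s, w k * a k)
      (cobounded ℂ) (𝓝 0) := by
  set φ : ℂ → ℂ := fun z => ∑ k ∈ s, w k * log (1 + a k / z)
  have hzφ : Tendsto (fun z => z * φ z) (cobounded ℂ) (𝓝 (∑ k ∈ s, w k * a k)) := by
    simp only [φ, mul_sum, mul_left_comm _ (w _)]
    exact tendsto_finsetSum _ fun k _ =>
      (tendsto_mul_log_one_add_div_cobounded (a k)).const_mul (w k)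
  have hφ : Tendsto φ (cobounded ℂ) (𝓝 0) := by
    have := hzφ.mul tendsto_inv₀_cobounded
    rw [mul_zero] at this
    refine this.congr' ?_
    filter_upwards [eventually_ne_cobounded 0] with z hz
    field_simp
  have hfactor : ∀ᶠ z in cobounded ℂ, exp (∑ k ∈ s, w k * log ((a k : ℂ) + z)) = z * exp (φ z) := by
    filter_upwards [eventually_cobounded_le_norm (∑ k ∈ s, |a k| + 1)] with z hz
    have hlt : ∀ k ∈ s, |a k| < ‖z‖ := fun k hk => by
      linarith [single_le_sum (fun j _ => abs_nonneg (a j)) hk]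
    have hz : z ≠ 0 := norm_pos_iff.1 <| by
      linarith [sum_nonneg fun j (_ : j ∈ s) => abs_nonneg (a j)]
    have hsum : ∑ k ∈ s, w k * log ((a k : ℂ) + z) = log z + φ z := by
      rw [← one_mul (log z), ← hw, sum_mul, ← sum_add_distrib]
      exact sum_congr rfl fun k hk => by rw [log_ofReal_add (hlt k hk), mul_add]
    rw [hsum, Complex.exp_add, exp_log hz]
  have hexp : HasDerivAt (fun w : ℂ => exp w - 1) 1 0 := by
    simpa using (Complex.hasDerivAt_exp 0).sub_const 1
  have := (hexp.tendsto_mul_comp (by simp) hφ hzφ).sub_const (∑ k ∈ s, w k * a k)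
  rw [one_mul, sub_self] at this
  refine this.congr' ?_
  filter_upwards [hfactor] with z hz
  rw [hz]
  ring

theorem ofReal_add_mem_slitPlane_of_le {s t : ℝ} (hst : s ≤ t) {z : ℂ}
    (hz : (s : ℂ) + z ∈ slitPlane) : (t : ℂ) + z ∈ slitPlane := by
  rw [mem_slitPlane_iff] at hz ⊢
  simp only [add_re, add_im, ofReal_re, ofReal_im, zero_add] at hz ⊢
  exact hz.imp (fun h => by linarith) id

theorem holomorphic_and_decay_at_infinity_general
    (n : ℕ) (hn : 1 ≤ n) (a : ℕ → ℝ)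
    (hmono : ∀ k ∈ Finset.Icc 1 (n - 1), a k ≤ a (k + 1)) :
    DifferentiableOn ℂ
        (fun z : ℂ =>
          Complex.exp ((1 / (n : ℂ)) *
              ∑ k ∈ Finset.Icc 1 n, Complex.log (((a k : ℝ) : ℂ) + z))
            - z - (((∑ k ∈ Finset.Icc 1 n, a k) / n : ℝ) : ℂ))
        {z : ℂ | ((a 1 : ℝ) : ℂ) + z ∈ Complex.slitPlane}
      ∧ Tendsto
          (fun z : ℂ =>
            Complex.exp ((1 / (n : ℂ)) *
                ∑ k ∈ Finset.Icc 1 n, Complex.log (((a k : ℝ) : ℂ) + z))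
              - z - (((∑ k ∈ Finset.Icc 1 n, a k) / n : ℝ) : ℂ))
          (Filter.comap (fun z : ℂ => ‖z‖) Filter.atTop) (nhds 0) := by
  have hmon : MonotoneOn a (Set.Icc 1 n) :=
    monotoneOn_of_le_add_one Set.ordConnected_Icc fun k _ hk hk1 =>
      hmono k (by simp only [mem_Icc, Set.mem_Icc] at hk hk1 ⊢; omega)
  constructor
  · intro z hz
    have hslit : ∀ k ∈ Icc 1 n, ((a k : ℝ) : ℂ) + z ∈ slitPlane := fun k hk =>
      ofReal_add_mem_slitPlane_of_le
        (hmon (by simp; omega) (by simpa using hk) (mem_Icc.1 hk).1) hz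
    refine DifferentiableAt.differentiableWithinAt ?_
    fun_prop (disch := exact hslit _ ‹_›)
  · have hn0 : (n : ℂ) ≠ 0 := by exact_mod_cast (by omega : n ≠ 0)
    have hw : ∑ k ∈ Icc 1 n, 1 / (n : ℂ) = 1 := by simp [hn0]
    have := tendsto_exp_sum_mul_log_ofReal_add_sub_cobounded _ _ hw a
    rw [comap_norm_atTop]
    convert this using 3 with z
    · rw [mul_sum]
    · push_cast
      rw [sum_div]
      simp [div_eq_mul_inv, mul_comm]

theorem holomorphic_and_decay_at_infinity
    (n : ℕ) (hn : 1 ≤ n) (a : ℕ → ℝ)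
    (hpos : ∀ k ∈ Finset.Icc 1 n, 0 < a k)
    (hmono : ∀ k ∈ Finset.Icc 1 (n - 1), a k ≤ a (k + 1)) :
    DifferentiableOn ℂ
        (fun z : ℂ =>
          Complex.exp ((1 / (n : ℂ)) *
              ∑ k ∈ Finset.Icc 1 n, Complex.log (((a k : ℝ) : ℂ) + z))
            - z - (((∑ k ∈ Finset.Icc 1 n, a k) / n : ℝ) : ℂ))
        {z : ℂ | ((a 1 : ℝ) : ℂ) + z ∈ Complex.slitPlane}
      ∧ Tendsto
          (fun z : ℂ =>
            Complex.exp ((1 / (n : ℂ)) *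
                ∑ k ∈ Finset.Icc 1 n, Complex.log (((a k : ℝ) : ℂ) + z))
              - z - (((∑ k ∈ Finset.Icc 1 n, a k) / n : ℝ) : ℂ))
          (Filter.comap (fun z : ℂ => ‖z‖) Filter.atTop) (nhds 0) :=
  holomorphic_and_decay_at_infinity_general n hn a hmono
end
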